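/- Let A be a symmetric positive-definite 3×3 real matrix with μ_A < 0 (elliptic flow), S := A⁻¹J(A−I), and M̃ the associated symbol. Then every plane-wave solution of the linearised semi-geostrophic equation is bounded: for every a₀ ∈ ℝ and k₀ ∈ ℝ³ \ {0} there exists a constant C such that |a₀ M̃(t;k₀)| · |e^{−tSᵀ}k₀| ≤ C for all t ∈ ℝ. Hence the quadratic steady solution P̄(x) = ½ x·Ax is stable to plane-wave perturbations. -/

import Mathlib

open Matrix MeasureTheory Real

/-- The Coriolis-type matrix `J`. -/
noncomputable def Jmat : Matrix (Fin 3) (Fin 3) ℝ := !![0, -1, 0; 1, 0, 0; 0, 0, 0]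

/-- The matrix `S := A⁻¹ J (A − I)`. -/
noncomputable def Smat (A : Matrix (Fin 3) (Fin 3) ℝ) : Matrix (Fin 3) (Fin 3) ℝ :=
  A⁻¹ * Jmat * (A - 1)

/-- The symbol `m(x) = 2 (x · A⁻¹Jx)/(x · A⁻¹x)`. -/
noncomputable def symb (A : Matrix (Fin 3) (Fin 3) ℝ) (x : Fin 3 → ℝ) : ℝ :=
  2 * (x ⬝ᵥ (A⁻¹ * Jmat) *ᵥ x) / (x ⬝ᵥ A⁻¹ *ᵥ x)

/-- The symbol `M̃(t;ξ) := exp(∫₀ᵗ m(e^{−rSᵀ}ξ) dr)`. -/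
noncomputable def symbM (A : Matrix (Fin 3) (Fin 3) ℝ) (t : ℝ) (ξ : Fin 3 → ℝ) : ℝ :=
  Real.exp (∫ r in (0:ℝ)..t, symb A (NormedSpace.exp ((-r) • (Smat A)ᵀ) *ᵥ ξ))

/-- The Euclidean norm on `ℝ³`. -/
noncomputable def eunorm (v : Fin 3 → ℝ) : ℝ := Real.sqrt (∑ i : Fin 3, v i ^ 2)

/-!
When `μ_A < 0`, the matrix `N = -Sᵀ` satisfies `N³ = -ω² N` with `ω² = -μ_A / det A > 0`, so
`e^{tN} = 1 + (sin ωt / ω) N + ((1 - cos ωt) / ω²) N²` and the wave vector `k(t) = e^{-tSᵀ} k₀`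
is periodic in `t`. Along `k(t)` the quadratic form `q(k) = k · A⁻¹k` satisfies `q' = -m(k) q`,
so `M̃(t;k₀) = q(k₀) / q(k(t))`. The amplitude `|a₀ M̃(t;k₀)| |k(t)|` is therefore a continuous
periodic function of `t`, hence bounded.
-/

namespace Matrix

variable {m : Type*} [Fintype m]

theorem dotProduct_transpose_mulVec_self (M : Matrix m m ℝ) (v : m → ℝ) :
    v ⬝ᵥ Mᵀ *ᵥ v = v ⬝ᵥ M *ᵥ v := by
  rw [dotProduct_mulVec, vecMul_transpose, dotProduct_comm]

theorem dotProduct_mulVec_self_eq_zero_of_transpose_eq_neg {M : Matrix m m ℝ} (hM : Mᵀ = -M)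
    (v : m → ℝ) : v ⬝ᵥ M *ᵥ v = 0 := by
  have h := dotProduct_transpose_mulVec_self M v
  rw [hM, neg_mulVec, dotProduct_neg] at h
  linarith

theorem _root_.HasDerivAt.dotProduct {x y : ℝ → m → ℝ} {x' y' : m → ℝ} {t : ℝ}
    (hx : HasDerivAt x x' t) (hy : HasDerivAt y y' t) :
    HasDerivAt (fun s => x s ⬝ᵥ y s) (x' ⬝ᵥ y t + x t ⬝ᵥ y') t := by
  rw [show x' ⬝ᵥ y t + x t ⬝ᵥ y' = ∑ i, (x' i * y t i + x t i * y' i) from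
    Finset.sum_add_distrib.symm]
  exact HasDerivAt.fun_sum fun i _ => (hasDerivAt_pi.1 hx i).mul (hasDerivAt_pi.1 hy i)

theorem _root_.HasDerivAt.mulVec {x : ℝ → m → ℝ} {x' : m → ℝ} {t : ℝ} (B : Matrix m m ℝ)
    (hx : HasDerivAt x x' t) : HasDerivAt (fun s => B *ᵥ x s) (B *ᵥ x') t :=
  B.mulVecLin.toContinuousLinearMap.hasFDerivAt.comp_hasDerivAt t hx

theorem _root_.HasDerivAt.dotProduct_mulVec_self {x : ℝ → m → ℝ} {x' : m → ℝ} {t : ℝ}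
    {B : Matrix m m ℝ} (hB : Bᵀ = B) (hx : HasDerivAt x x' t) :
    HasDerivAt (fun s => x s ⬝ᵥ B *ᵥ x s) (2 * (x t ⬝ᵥ B *ᵥ x')) t := by
  convert hx.dotProduct (hx.mulVec B) using 1
  rw [dotProduct_mulVec x', ← mulVec_transpose, hB, dotProduct_comm]
  ring

variable [DecidableEq m]

open scoped Matrix.Norms.Operator

theorem hasDerivAt_exp_smul_mulVec (N : Matrix m m ℝ) (v : m → ℝ) (t : ℝ) :
    HasDerivAt (fun s : ℝ => NormedSpace.exp (s • N) *ᵥ v)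
      (N *ᵥ (NormedSpace.exp (t • N) *ᵥ v)) t := by
  rw [mulVec_mulVec]
  exact ((mulVecBilin ℝ ℝ).flip v).toContinuousLinearMap.hasFDerivAt.comp_hasDerivAt t
    (hasDerivAt_exp_smul_const' N t)

theorem eq_exp_smul_of_hasDerivAt {N : Matrix m m ℝ} {E : ℝ → Matrix m m ℝ}
    (hE : ∀ t, HasDerivAt E (N * E t) t) (hE₀ : E 0 = 1) (t : ℝ) :
    E t = NormedSpace.exp (t • N) := by
  have hderiv (s : ℝ) :
      HasDerivAt (fun s => NormedSpace.exp (s • -N) * E s) 0 s := by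
    refine ((hasDerivAt_exp_smul_const (-N) s).mul (hE s)).congr_deriv ?_
    rw [mul_neg, neg_mul, mul_assoc, neg_add_cancel]
  have hconst : NormedSpace.exp (t • -N) * E t = 1 := by
    rw [is_const_of_deriv_eq_zero (fun s => (hderiv s).differentiableAt)
      (fun s => (hderiv s).deriv) t 0, zero_smul, NormedSpace.exp_zero, one_mul, hE₀]
  have hinv : NormedSpace.exp (t • N) * NormedSpace.exp (t • -N) = 1 := by
    rw [← exp_add_of_commute _ _ (((Commute.refl N).neg_right.smul_right t).smul_left t),
      ← smul_add, add_neg_cancel, smul_zero, NormedSpace.exp_zero]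
  rw [← one_mul (E t), ← hinv, mul_assoc, hconst, mul_one]

theorem exp_smul_eq_of_cube {N : Matrix m m ℝ} {ω : ℝ} (hω : ω ≠ 0)
    (hN : N * N * N = -ω ^ 2 • N) (t : ℝ) :
    NormedSpace.exp (t • N)
      = 1 + (Real.sin (ω * t) / ω) • N + ((1 - Real.cos (ω * t)) / ω ^ 2) • (N * N) := by
  refine (eq_exp_smul_of_hasDerivAt
    (E := fun t => 1 + (Real.sin (ω * t) / ω) • N + ((1 - Real.cos (ω * t)) / ω ^ 2) • (N * N))
    (fun t => ?_) (by simp) t).symm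
  have hsin : HasDerivAt (fun s => Real.sin (ω * s) / ω) (Real.cos (ω * t)) t := by
    refine ((((hasDerivAt_id' t).const_mul ω).sin).div_const ω).congr_deriv ?_
    field_simp
  have hcos : HasDerivAt (fun s => (1 - Real.cos (ω * s)) / ω ^ 2)
      (Real.sin (ω * t) / ω) t := by
    refine (((((hasDerivAt_id' t).const_mul ω).cos).const_sub 1).div_const (ω ^ 2)).congr_deriv
      ?_
    field_simp
  refine (((hsin.smul_const N).const_add 1).add (hcos.smul_const (N * N))).congr_deriv ?_
  rw [mul_add, mul_add, mul_one, mul_smul_comm, mul_smul_comm, ← mul_assoc N N N, hN, smul_smul]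
  have : (1 - Real.cos (ω * t)) / ω ^ 2 * -ω ^ 2 = Real.cos (ω * t) - 1 := by
    field_simp
    ring
  rw [this, sub_smul, one_smul]
  abel

theorem periodic_exp_smul_of_cube {N : Matrix m m ℝ} {ω : ℝ} (hω : ω ≠ 0)
    (hN : N * N * N = -ω ^ 2 • N) :
    Function.Periodic (fun t : ℝ => NormedSpace.exp (t • N)) (2 * π / ω) := by
  intro t
  simp only [exp_smul_eq_of_cube hω hN]
  rw [mul_add, mul_div_cancel₀ _ hω, Real.sin_add_two_pi, Real.cos_add_two_pi]

end Matrix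

theorem Jmat_transpose : Jmatᵀ = -Jmat := by
  ext i j
  fin_cases i <;> fin_cases j <;> simp [Jmat]

theorem Smat_mul_self_mul_self {a b c d e f : ℝ} {A : Matrix (Fin 3) (Fin 3) ℝ}
    (hA : A = !![a, b, c; b, d, e; c, e, f]) (hdet : A.det ≠ 0) :
    Smat A * Smat A * Smat A
      = ((a * f - c ^ 2 + d * f - e ^ 2 - f - A.det) / A.det) • Smat A := by
  have hS : Smat A = (A.det)⁻¹ • (A.adjugate * Jmat * (A - 1)) := by
    rw [Smat, inv_def, Ring.inverse_eq_inv, smul_mul, smul_mul]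
  have hcube : A.adjugate * Jmat * (A - 1) * (A.adjugate * Jmat * (A - 1))
      * (A.adjugate * Jmat * (A - 1))
      = ((a * f - c ^ 2 + d * f - e ^ 2 - f - A.det) * A.det) •
        (A.adjugate * Jmat * (A - 1)) := by
    have hA1 : A - 1 = !![a - 1, b, c; b, d - 1, e; c, e, f - 1] := by
      rw [hA, ← sub_eq_zero]
      ext i j
      fin_cases i <;> fin_cases j <;> simp [one_apply]
    rw [hA1, hA, adjugate_fin_three, det_fin_three, Jmat]
    simp only [mul_fin_three]
    ext i j
    fin_cases i <;> fin_cases j <;> simp <;> ring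
  rw [hS, smul_mul_smul, smul_mul_smul, hcube, smul_smul, smul_smul]
  congr 1
  field_simp

theorem dotProduct_inv_mul_transpose_Smat {A : Matrix (Fin 3) (Fin 3) ℝ} (hA : Aᵀ = A)
    (hdet : IsUnit A.det) (v : Fin 3 → ℝ) :
    v ⬝ᵥ (A⁻¹ * (Smat A)ᵀ) *ᵥ v = v ⬝ᵥ (A⁻¹ * Jmat) *ᵥ v := by
  have hinv : A⁻¹ᵀ = A⁻¹ := by rw [transpose_nonsing_inv, hA]
  have hskew : (A⁻¹ * Jmat * A⁻¹)ᵀ = -(A⁻¹ * Jmat * A⁻¹) := by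
    rw [transpose_mul, transpose_mul, hinv, Jmat_transpose, neg_mul, mul_neg, mul_assoc]
  have hT : (A⁻¹ * (Smat A)ᵀ)ᵀ = A⁻¹ * Jmat - A⁻¹ * Jmat * A⁻¹ := by
    rw [transpose_mul, transpose_transpose, hinv, Smat, mul_assoc, sub_mul, one_mul,
      mul_nonsing_inv _ hdet, mul_sub, mul_one]
  rw [← dotProduct_transpose_mulVec_self, hT, sub_mulVec, dotProduct_sub,
    dotProduct_mulVec_self_eq_zero_of_transpose_eq_neg hskew, sub_zero]

noncomputable def waveVector (A : Matrix (Fin 3) (Fin 3) ℝ) (k₀ : Fin 3 → ℝ) (t : ℝ) :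
    Fin 3 → ℝ :=
  NormedSpace.exp ((-t) • (Smat A)ᵀ) *ᵥ k₀

section waveVector

variable {A : Matrix (Fin 3) (Fin 3) ℝ} {k₀ : Fin 3 → ℝ}

theorem waveVector_eq (A : Matrix (Fin 3) (Fin 3) ℝ) (k₀ : Fin 3 → ℝ) :
    waveVector A k₀ = fun t => NormedSpace.exp (t • -(Smat A)ᵀ) *ᵥ k₀ := by
  funext t
  rw [waveVector, smul_neg, neg_smul]

theorem hasDerivAt_waveVector (A : Matrix (Fin 3) (Fin 3) ℝ) (k₀ : Fin 3 → ℝ) (t : ℝ) :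
    HasDerivAt (waveVector A k₀) (-(Smat A)ᵀ *ᵥ waveVector A k₀ t) t := by
  rw [waveVector_eq]
  exact hasDerivAt_exp_smul_mulVec _ _ t

theorem continuous_waveVector (A : Matrix (Fin 3) (Fin 3) ℝ) (k₀ : Fin 3 → ℝ) :
    Continuous (waveVector A k₀) :=
  continuous_iff_continuousAt.2 fun t => (hasDerivAt_waveVector A k₀ t).continuousAt

theorem continuous_dotProduct_mulVec_waveVector (B : Matrix (Fin 3) (Fin 3) ℝ) :
    Continuous fun t => waveVector A k₀ t ⬝ᵥ B *ᵥ waveVector A k₀ t :=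
  (continuous_waveVector A k₀).dotProduct
    (continuous_const.matrix_mulVec (continuous_waveVector A k₀))

theorem waveVector_zero (A : Matrix (Fin 3) (Fin 3) ℝ) (k₀ : Fin 3 → ℝ) :
    waveVector A k₀ 0 = k₀ := by
  simp [waveVector]

theorem waveVector_ne_zero (hk₀ : k₀ ≠ 0) (t : ℝ) : waveVector A k₀ t ≠ 0 := by
  intro h
  refine hk₀ (mulVec_injective_iff_isUnit.2 (Matrix.isUnit_exp ((-t) • (Smat A)ᵀ)) ?_)
  rw [mulVec_zero]
  exact h

theorem dotProduct_inv_mulVec_waveVector_pos (hA : A.PosDef) (hk₀ : k₀ ≠ 0) (t : ℝ) :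
    0 < waveVector A k₀ t ⬝ᵥ A⁻¹ *ᵥ waveVector A k₀ t := by
  simpa using hA.inv.dotProduct_mulVec_pos (waveVector_ne_zero hk₀ t)

theorem hasDerivAt_neg_log_waveVector (hA : A.PosDef) (hk₀ : k₀ ≠ 0) (t : ℝ) :
    HasDerivAt (fun s => -Real.log (waveVector A k₀ s ⬝ᵥ A⁻¹ *ᵥ waveVector A k₀ s))
      (symb A (waveVector A k₀ t)) t := by
  have hAT : Aᵀ = A := by rw [← conjTranspose_eq_transpose_of_trivial, hA.isHermitian.eq]
  have hinv : A⁻¹ᵀ = A⁻¹ := by rw [transpose_nonsing_inv, hAT]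
  refine ((((hasDerivAt_waveVector A k₀ t).dotProduct_mulVec_self hinv).log
    (dotProduct_inv_mulVec_waveVector_pos hA hk₀ t).ne').neg).congr_deriv ?_
  rw [mulVec_mulVec, mul_neg, neg_mulVec, dotProduct_neg,
    dotProduct_inv_mul_transpose_Smat hAT ((isUnit_iff_isUnit_det A).1 hA.isUnit), symb]
  ring

theorem symbM_eq_div (hA : A.PosDef) (hk₀ : k₀ ≠ 0) (t : ℝ) :
    symbM A t k₀ = (k₀ ⬝ᵥ A⁻¹ *ᵥ k₀) / (waveVector A k₀ t ⬝ᵥ A⁻¹ *ᵥ waveVector A k₀ t) := by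
  have hsymb : Continuous fun s => symb A (waveVector A k₀ s) :=
    (continuous_const.mul (continuous_dotProduct_mulVec_waveVector _)).div
      (continuous_dotProduct_mulVec_waveVector _)
      fun s => (dotProduct_inv_mulVec_waveVector_pos hA hk₀ s).ne'
  change Real.exp (∫ s in (0 : ℝ)..t, symb A (waveVector A k₀ s)) = _
  rw [intervalIntegral.integral_eq_sub_of_hasDerivAt
    (fun s _ => hasDerivAt_neg_log_waveVector hA hk₀ s) (hsymb.intervalIntegrable 0 t),
    waveVector_zero, neg_sub_neg, Real.exp_sub,
    Real.exp_log (by simpa only [waveVector_zero] using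
      dotProduct_inv_mulVec_waveVector_pos hA hk₀ 0),
    Real.exp_log (dotProduct_inv_mulVec_waveVector_pos hA hk₀ t)]

theorem exists_periodic_waveVector {a b c d e f μ : ℝ}
    (hA : A = !![a, b, c; b, d, e; c, e, f]) (hdet : 0 < A.det)
    (hμ : μ = a * f - c ^ 2 + d * f - e ^ 2 - f - A.det) (hμneg : μ < 0) (k₀ : Fin 3 → ℝ) :
    ∃ T ≠ 0, Function.Periodic (waveVector A k₀) T := by
  have hω2 : 0 < -μ / A.det := div_pos (neg_pos.2 hμneg) hdet
  set ω := √(-μ / A.det)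
  have hω : 0 < ω := Real.sqrt_pos.2 hω2
  have hcube : -(Smat A)ᵀ * -(Smat A)ᵀ * -(Smat A)ᵀ = -ω ^ 2 • -(Smat A)ᵀ := by
    rw [Real.sq_sqrt hω2.le, neg_div, neg_neg, neg_mul_neg, mul_neg, ← transpose_mul,
      ← transpose_mul, ← mul_assoc, Smat_mul_self_mul_self hA hdet.ne', ← hμ, transpose_smul,
      smul_neg]
  refine ⟨2 * π / ω, by positivity, ?_⟩
  rw [waveVector_eq]
  exact (periodic_exp_smul_of_cube hω.ne' hcube).comp (· *ᵥ k₀)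

end waveVector

theorem continuous_eunorm : Continuous eunorm := by
  unfold eunorm
  fun_prop

/-- in the elliptic case `μ_A < 0`, every plane-wave solution of the
linearised semi-geostrophic equation is bounded:
`|a₀ M̃(t;k₀)|·|e^{−tSᵀ}k₀| ≤ C` for all `t`. Hence `P̄(x) = ½x·Ax` is stable to
plane-wave perturbations. -/
theorem elliptic_stability (a b c d e f : ℝ) (A : Matrix (Fin 3) (Fin 3) ℝ)
    (hA : A = !![a, b, c; b, d, e; c, e, f]) (hApd : A.PosDef)
    (μ : ℝ) (hμ : μ = a * f - c ^ 2 + d * f - e ^ 2 - f - A.det) (hμneg : μ < 0) :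
    ∀ a₀ : ℝ, ∀ k₀ : Fin 3 → ℝ, k₀ ≠ 0 →
      ∃ C : ℝ, ∀ t : ℝ,
        |a₀ * symbM A t k₀| * eunorm (NormedSpace.exp ((-t) • (Smat A)ᵀ) *ᵥ k₀) ≤ C := by
  intro a₀ k₀ hk₀
  obtain ⟨T, hT, hper⟩ := exists_periodic_waveVector hA hApd.det_pos hμ hμneg k₀
  let amplitude (v : Fin 3 → ℝ) : ℝ :=
    |a₀ * ((k₀ ⬝ᵥ A⁻¹ *ᵥ k₀) / (v ⬝ᵥ A⁻¹ *ᵥ v))| * eunorm v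
  have hcont : Continuous (amplitude ∘ waveVector A k₀) :=
    ((continuous_const.mul (continuous_const.div (continuous_dotProduct_mulVec_waveVector _)
      fun t => (dotProduct_inv_mulVec_waveVector_pos hApd hk₀ t).ne')).abs).mul
      (continuous_eunorm.comp (continuous_waveVector A k₀))
  obtain ⟨C, hC⟩ := ((hper.comp amplitude).isBounded_of_continuous hT hcont).bddAbove
  exact ⟨C, fun t => by rw [symbM_eq_div hApd hk₀]; exact hC ⟨t, rfl⟩⟩
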